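/- Global lower bound in the diffusion-dominated regime (Proposition 4.7, inequality part): Let d ≥ 3, 0 < m < 1+2/d, α = (d+2−(d−2)m)/(dm), and M > 0. Assume C_* > 0 is a constant such that the Gagliardo–Nirenberg–Sobolev inequality (∫u^{m+1} dx)^{(α+2)/(m+1)} ≤ C_* (∫u dx)^α ∫|∇u|² dx holds for every u ∈ 𝒞. Set P_* = ((α+2)/(2 C_* M^α))^{1/(m−α−1)}. Then for every u ∈ 𝒞 with ∫u dx = M, one has F(u) ≥ ((dm−(d+2))/((d+2)(m+1))) P_*^{m+1}; here the right-hand side is strictly negative. -/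

import Mathlib

/-!
With `I = ∫ u^{m+1}`, `q = (α+2)/(m+1) > 1` and `K = C_* M^α`, the GNS inequality reads
`I^q ≤ K ∫ |∇u|²`, so `F(u) ≥ I^q/(2K) - I/(m+1)`. The right-hand side is convex in `I`, hence
bounded below by its tangent line (Bernoulli's inequality) at the critical point
`I = P_*^{m+1}`, where it takes the value `(1/(α+2) - 1/(m+1)) P_*^{m+1}`.
-/

open MeasureTheory Real

noncomputable section

/-- The free energy `F(u) = (1/2)∫|∇u|² dx − (1/(m+1))∫u^{m+1} dx`. -/
def freeEnergy {d : ℕ} (m : ℝ) (u : EuclideanSpace ℝ (Fin d) → ℝ) : ℝ :=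
  (1 / 2) * (∫ x, ‖gradient u x‖ ^ 2) - (1 / (m + 1)) * ∫ x, u x ^ (m + 1)

theorem Real.rpow_tangent_le {q x t : ℝ} (hq : 1 ≤ q) (hx : 0 ≤ x) (ht : 0 < t) :
    t ^ q + q * t ^ (q - 1) * (x - t) ≤ x ^ q := by
  have hbern := one_add_mul_self_le_rpow_one_add (s := x / t - 1)
    (by linarith [div_nonneg hx ht.le]) hq
  rw [add_sub_cancel, div_rpow hx ht.le, le_div_iff₀ (by positivity)] at hbern
  calc t ^ q + q * t ^ (q - 1) * (x - t) = (1 + q * (x / t - 1)) * t ^ q := by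
        rw [rpow_sub_one ht.ne']; field_simp
    _ ≤ x ^ q := hbern

theorem mul_rpow_le_rpow_div_sub_div {a b c z : ℝ} (hb : 0 < b) (hba : b < a) (hc : 0 < c)
    (hz : 0 ≤ z) :
    (1 / a - 1 / b) * ((a / c) ^ (1 / (b - a))) ^ b ≤ z ^ (a / b) / c - z / b := by
  set P := (a / c) ^ (1 / (b - a))
  have ha : 0 < a := hb.trans hba
  have hP : 0 < P := by positivity
  have hPab : P ^ (a - b) = c / a := by
    have : 1 / (b - a) * (a - b) = -1 := by
      rw [one_div_mul_eq_div, ← neg_sub b a, neg_div, div_self (sub_neg.2 hba).ne]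
    rw [← rpow_mul (by positivity), this, rpow_neg_one, inv_div]
  have htangent := Real.rpow_tangent_le (x := z) (t := P ^ b) ((one_le_div hb).2 hba.le) hz
    (by positivity)
  have hexp : b * (a / b) = a := mul_div_cancel₀ _ hb.ne'
  have hexp' : b * (a / b - 1) = a - b := by rw [mul_sub, hexp, mul_one]
  have hPa : P ^ a = P ^ b * (c / a) := by rw [← hPab, ← rpow_add hP, add_sub_cancel]
  rw [← rpow_mul hP.le, ← rpow_mul hP.le, hexp, hexp', hPab, hPa] at htangent
  rw [le_sub_iff_add_le, le_div_iff₀ hc]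
  calc ((1 / a - 1 / b) * P ^ b + z / b) * c
      = P ^ b * (c / a) + a / b * (c / a) * (z - P ^ b) := by field_simp; ring
    _ ≤ z ^ (a / b) := htangent

section Exponents

variable {d m α : ℝ} (hd : 0 < d) (hm : 0 < m) (hα : α = (d + 2 - (d - 2) * m) / (d * m))
include hd hm hα

theorem alpha_add_two_eq : α + 2 = (d + 2) * (m + 1) / (d * m) := by
  rw [hα]
  field_simp
  ring

theorem add_one_lt_alpha_add_two (hdm : d * m < d + 2) : m + 1 < α + 2 := by
  rw [alpha_add_two_eq hd hm hα, lt_div_iff₀ (by positivity), mul_comm]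
  exact mul_lt_mul_of_pos_right hdm (by linarith)

theorem one_div_alpha_add_two_sub_one_div :
    1 / (α + 2) - 1 / (m + 1) = (d * m - (d + 2)) / ((d + 2) * (m + 1)) := by
  rw [alpha_add_two_eq hd hm hα]
  field_simp

end Exponents

theorem div_sub_div_le_freeEnergy {d : ℕ} {m q K : ℝ} (hK : 0 < K)
    {u : EuclideanSpace ℝ (Fin d) → ℝ}
    (hGNS : (∫ x, u x ^ (m + 1)) ^ q ≤ K * ∫ x, ‖gradient u x‖ ^ 2) :
    (∫ x, u x ^ (m + 1)) ^ q / (2 * K) - (∫ x, u x ^ (m + 1)) / (m + 1) ≤ freeEnergy m u := by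
  have hgrad : (∫ x, u x ^ (m + 1)) ^ q / (2 * K) ≤ 1 / 2 * ∫ x, ‖gradient u x‖ ^ 2 := by
    rw [div_le_iff₀ (by positivity)]
    linarith
  rw [freeEnergy, one_div_mul_eq_div _ (∫ x, u x ^ (m + 1))]
  linarith

/-- **Global lower bound in the diffusion-dominated regime**
(Proposition 4.7, inequality part). -/
theorem diffusion_dominated_lower_bound (d : ℕ) (hd : 3 ≤ d) (m : ℝ)
    (hm0 : 0 < m) (hm1 : m < 1 + 2 / (d : ℝ))
    (α : ℝ) (hα : α = ((d : ℝ) + 2 - ((d : ℝ) - 2) * m) / ((d : ℝ) * m))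
    (M : ℝ) (hM : 0 < M) (Cstar : ℝ) (hC : 0 < Cstar)
    (hGNS : ∀ u : EuclideanSpace ℝ (Fin d) → ℝ,
      (∀ x, 0 ≤ u x) → ContDiff ℝ 1 u →
      Integrable u → Integrable (fun x => ‖gradient u x‖ ^ 2) →
      Integrable (fun x => u x ^ (m + 1)) →
      (∫ x, u x ^ (m + 1)) ^ ((α + 2) / (m + 1)) ≤
        Cstar * (∫ x, u x) ^ α * ∫ x, ‖gradient u x‖ ^ 2)
    (Pstar : ℝ) (hP : Pstar = ((α + 2) / (2 * Cstar * M ^ α)) ^ (1 / (m - α - 1)))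
    (u : EuclideanSpace ℝ (Fin d) → ℝ)
    (hupos : ∀ x, 0 ≤ u x) (hu : ContDiff ℝ 1 u)
    (huint : Integrable u) (hugrad : Integrable (fun x => ‖gradient u x‖ ^ 2))
    (hupow : Integrable (fun x => u x ^ (m + 1)))
    (humass : (∫ x, u x) = M) :
    freeEnergy m u ≥
      (((d : ℝ) * m - ((d : ℝ) + 2)) / (((d : ℝ) + 2) * (m + 1))) * Pstar ^ (m + 1) ∧
    (((d : ℝ) * m - ((d : ℝ) + 2)) / (((d : ℝ) + 2) * (m + 1))) * Pstar ^ (m + 1) < 0 := by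
  have hd0 : (0 : ℝ) < d := by exact_mod_cast (by omega : 0 < d)
  have hdm : (d : ℝ) * m < d + 2 := by
    calc (d : ℝ) * m < d * (1 + 2 / d) := mul_lt_mul_of_pos_left hm1 hd0
      _ = d + 2 := by field_simp
  have hexp := add_one_lt_alpha_add_two hd0 hm0 hα hdm
  have hK : 0 < Cstar * M ^ α := by positivity
  have hPstar : Pstar = ((α + 2) / (2 * (Cstar * M ^ α))) ^ (1 / (m + 1 - (α + 2))) := by
    rw [hP, mul_assoc, show m - α - 1 = m + 1 - (α + 2) by ring]
  have hGNSu := hGNS u hupos hu huint hugrad hupow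
  rw [humass] at hGNSu
  have hI : 0 ≤ ∫ x, u x ^ (m + 1) := integral_nonneg fun x => rpow_nonneg (hupos x) _
  rw [← one_div_alpha_add_two_sub_one_div hd0 hm0 hα]
  constructor
  · rw [ge_iff_le, hPstar]
    exact (mul_rpow_le_rpow_div_sub_div (by linarith) hexp (by positivity) hI).trans
      (div_sub_div_le_freeEnergy hK hGNSu)
  · have hPpos : 0 < Pstar := by
      rw [hPstar]
      exact rpow_pos_of_pos (div_pos (by linarith) (by positivity)) _
    have hcoef : 1 / (α + 2) - 1 / (m + 1) < 0 := by
      rw [sub_neg]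
      exact one_div_lt_one_div_of_lt (by linarith) hexp
    exact mul_neg_of_neg_of_pos hcoef (rpow_pos_of_pos hPpos _)
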